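/- Closed-form direct data-driven control input: let U ∈ ℝ^{mT×N}, Y ∈ ℝ^{pT×N}, Q ∈ ℝ^{mT×mT} and R ∈ ℝ^{pT×pT} symmetric positive definite, y_ref ∈ ℝ^{pT}, and Y|U = Y U†U. Then every minimizer z* of z ↦ (Uz)ᵀ Q (Uz) + (Y|U z − y_ref)ᵀ R (Y|U z − y_ref) over z ∈ ℝ^N satisfies the normal equations (Uᵀ Q U + Y|Uᵀ R Y|U) z* = Y|Uᵀ R y_ref, and û = U z* with z* = (Uᵀ Q U + Y|Uᵀ R Y|U)† Y|Uᵀ R y_ref is such a minimizer's image. -/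

import Mathlib

/-!
The objective is `zᵀKz - 2bᵀz + const` with `K = UᵀQU + Y|UᵀR Y|U` positive semidefinite and
`b = Y|UᵀR y_ref`. Completing the square around any solution `z₀` of `Kz₀ = b` gives
`f z - f z₀ = (z - z₀)ᵀK(z - z₀) ≥ 0`, with equality iff `K(z - z₀) = 0`; so the minimizers are
exactly the solutions of the normal equations, once one solution exists. It does: `b` is
orthogonal to `ker K` (on `ker K` the positive definite `R` forces `Y|U w = 0`), and for a
symmetric `K` the orthogonal projection `K K†` fixes every such vector.
-/

open Matrix

namespace Matrix

variable {l m n : Type*}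

theorem PosSemidef.transpose_eq {K : Matrix n n ℝ} (hK : K.PosSemidef) : Kᵀ = K :=
  (isHermitian_iff_isSymm.mp hK.isHermitian).eq

variable [Fintype l] [Fintype m] [Fintype n]

section CommRing

variable {R : Type*} [CommRing R]

theorem dotProduct_transpose_mul_mul_mulVec (A : Matrix m n R) (M : Matrix m m R) (x : n → R) :
    x ⬝ᵥ (Aᵀ * M * A) *ᵥ x = A *ᵥ x ⬝ᵥ M *ᵥ (A *ᵥ x) := by
  rw [← mulVec_mulVec, ← mulVec_mulVec, dotProduct_mulVec, vecMul_transpose]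

theorem transpose_mul_mulVec_dotProduct (A : Matrix m n R) (M : Matrix m m R) (y : m → R)
    (x : n → R) : (Aᵀ * M) *ᵥ y ⬝ᵥ x = M *ᵥ y ⬝ᵥ A *ᵥ x := by
  rw [← mulVec_mulVec, mulVec_transpose, ← dotProduct_mulVec]

theorem sub_dotProduct_mulVec_sub {M : Matrix m m R} (hM : Mᵀ = M) (u v : m → R) :
    (u - v) ⬝ᵥ M *ᵥ (u - v) = u ⬝ᵥ M *ᵥ u - 2 * (M *ᵥ v ⬝ᵥ u) + v ⬝ᵥ M *ᵥ v := by
  have hsymm : v ⬝ᵥ M *ᵥ u = M *ᵥ v ⬝ᵥ u := by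
    rw [dotProduct_mulVec, ← mulVec_transpose, hM]
  rw [mulVec_sub, sub_dotProduct, dotProduct_sub, dotProduct_sub, hsymm,
    dotProduct_comm u (M *ᵥ v)]
  ring

theorem dotProduct_mulVec_sub_two_mul_eq {K : Matrix n n R} (hK : Kᵀ = K) {b z₀ : n → R}
    (hz₀ : K *ᵥ z₀ = b) (z : n → R) :
    z ⬝ᵥ K *ᵥ z - 2 * (b ⬝ᵥ z) = (z - z₀) ⬝ᵥ K *ᵥ (z - z₀) - z₀ ⬝ᵥ K *ᵥ z₀ := by
  rw [sub_dotProduct_mulVec_sub hK, hz₀]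
  ring

end CommRing

theorem mulVec_mul_mulVec_eq_of_forall_dotProduct_eq_zero {R : Type*} [CommRing R] [LinearOrder R]
    [IsStrictOrderedRing R] {K G : Matrix n n R} (hK : Kᵀ = K) (hKGK : K * G * K = K)
    (hKG : (K * G)ᵀ = K * G) {b : n → R} (hb : ∀ w, K *ᵥ w = 0 → b ⬝ᵥ w = 0) :
    K *ᵥ G *ᵥ b = b := by
  have hK_KG : K * (K * G) = K := by
    simpa only [transpose_mul, hKG, hK] using congrArg transpose hKGK
  set w := b - (K * G) *ᵥ b
  have hKw : K *ᵥ w = 0 := by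
    rw [mulVec_sub, mulVec_mulVec, hK_KG, sub_self]
  have hKGw : (K * G) *ᵥ w = 0 := by
    rw [← hKG, transpose_mul, hK, ← mulVec_mulVec, hKw, mulVec_zero]
  have hw : w ⬝ᵥ w = 0 := by
    calc w ⬝ᵥ w = b ⬝ᵥ w - w ⬝ᵥ (K * G) *ᵥ b := by rw [sub_dotProduct, dotProduct_comm w]
      _ = 0 := by rw [hb w hKw, dotProduct_mulVec, ← mulVec_transpose, hKG, hKGw,
                    zero_dotProduct, sub_zero]
  rw [mulVec_mulVec, eq_comm, ← sub_eq_zero]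
  exact dotProduct_self_eq_zero.mp hw

theorem PosSemidef.dotProduct_mulVec_eq_zero_iff {K : Matrix n n ℝ} (hK : K.PosSemidef)
    (x : n → ℝ) : x ⬝ᵥ K *ᵥ x = 0 ↔ K *ᵥ x = 0 := by
  simpa only [star_trivial] using hK.dotProduct_mulVec_zero_iff x

theorem PosSemidef.transpose_mul_mul_same {M : Matrix m m ℝ} (hM : M.PosSemidef)
    (A : Matrix m n ℝ) : (Aᵀ * M * A).PosSemidef := by
  simpa only [conjTranspose_eq_transpose_of_trivial] using hM.conjTranspose_mul_mul_same A

theorem PosSemidef.forall_le_iff_mulVec_eq {K : Matrix n n ℝ} (hK : K.PosSemidef)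
    {b z₀ : n → ℝ} (hz₀ : K *ᵥ z₀ = b) (z : n → ℝ) :
    (∀ y, z ⬝ᵥ K *ᵥ z - 2 * (b ⬝ᵥ z) ≤ y ⬝ᵥ K *ᵥ y - 2 * (b ⬝ᵥ y)) ↔ K *ᵥ z = b := by
  simp only [dotProduct_mulVec_sub_two_mul_eq hK.transpose_eq hz₀, sub_le_sub_iff_right]
  have hnonneg (y : n → ℝ) : 0 ≤ y ⬝ᵥ K *ᵥ y := by simpa using hK.dotProduct_mulVec_nonneg y
  constructor
  · intro hmin
    have hzero : (z - z₀) ⬝ᵥ K *ᵥ (z - z₀) = 0 :=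
      le_antisymm (by simpa using hmin z₀) (hnonneg _)
    rw [← hz₀, ← sub_eq_zero, ← mulVec_sub]
    exact (hK.dotProduct_mulVec_eq_zero_iff _).mp hzero
  · intro hz y
    rw [mulVec_sub, hz, hz₀, sub_self, dotProduct_zero]
    exact hnonneg _

theorem mulVec_eq_zero_of_transpose_mul_mul_add_mulVec_eq_zero {A : Matrix m n ℝ}
    {B : Matrix l n ℝ} {Q : Matrix m m ℝ} {R : Matrix l l ℝ} (hQ : Q.PosSemidef) (hR : R.PosDef)
    {w : n → ℝ} (hw : (Aᵀ * Q * A + Bᵀ * R * B) *ᵥ w = 0) : B *ᵥ w = 0 := by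
  have hsum : A *ᵥ w ⬝ᵥ Q *ᵥ (A *ᵥ w) + B *ᵥ w ⬝ᵥ R *ᵥ (B *ᵥ w) = 0 := by
    rw [← dotProduct_transpose_mul_mul_mulVec, ← dotProduct_transpose_mul_mul_mulVec,
      ← dotProduct_add, ← add_mulVec, hw, dotProduct_zero]
  have hA : 0 ≤ A *ᵥ w ⬝ᵥ Q *ᵥ (A *ᵥ w) := by simpa using hQ.dotProduct_mulVec_nonneg (A *ᵥ w)
  by_contra hne
  have hB : 0 < B *ᵥ w ⬝ᵥ R *ᵥ (B *ᵥ w) := by simpa using hR.dotProduct_mulVec_pos hne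
  linarith

end Matrix

theorem stmt19_general {a b N : ℕ}
    (U : Matrix (Fin a) (Fin N) ℝ)
    (Q : Matrix (Fin a) (Fin a) ℝ) (hQ : Q.PosDef)
    (R : Matrix (Fin b) (Fin b) ℝ) (hR : R.PosDef)
    (yref : Fin b → ℝ)
    (YU : Matrix (Fin b) (Fin N) ℝ)
    (f : (Fin N → ℝ) → ℝ)
    (hf : ∀ z, f z = U.mulVec z ⬝ᵥ Q.mulVec (U.mulVec z)
      + (YU.mulVec z - yref) ⬝ᵥ R.mulVec (YU.mulVec z - yref))
    (K : Matrix (Fin N) (Fin N) ℝ) (hK : K = Uᵀ * Q * U + YUᵀ * R * YU)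
    -- Moore–Penrose pseudoinverse of K
    (Kdag : Matrix (Fin N) (Fin N) ℝ)
    (hK1 : K * Kdag * K = K)
    (hK3 : (K * Kdag)ᵀ = K * Kdag) :
    (∀ zstar : Fin N → ℝ, (∀ z, f zstar ≤ f z) →
        K.mulVec zstar = (YUᵀ * R).mulVec yref) ∧
      (∀ z, f (Kdag.mulVec ((YUᵀ * R).mulVec yref)) ≤ f z) := by
  have hKpsd : K.PosSemidef :=
    hK ▸ (hQ.posSemidef.transpose_mul_mul_same U).add (hR.posSemidef.transpose_mul_mul_same YU)
  set bv := (YUᵀ * R) *ᵥ yref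
  have hf_eq (z : Fin N → ℝ) : f z = z ⬝ᵥ K *ᵥ z - 2 * (bv ⬝ᵥ z) + yref ⬝ᵥ R *ᵥ yref := by
    rw [hf, sub_dotProduct_mulVec_sub hR.posSemidef.transpose_eq, hK, add_mulVec, dotProduct_add,
      dotProduct_transpose_mul_mul_mulVec, dotProduct_transpose_mul_mul_mulVec,
      transpose_mul_mulVec_dotProduct]
    ring
  have hsol : K *ᵥ Kdag *ᵥ bv = bv :=
    mulVec_mul_mulVec_eq_of_forall_dotProduct_eq_zero hKpsd.transpose_eq hK1 hK3 fun w hw => by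
      subst hK
      rw [transpose_mul_mulVec_dotProduct,
        mulVec_eq_zero_of_transpose_mul_mul_add_mulVec_eq_zero hQ.posSemidef hR hw, dotProduct_zero]
  have hmin := hKpsd.forall_le_iff_mulVec_eq hsol
  simp only [hf_eq, add_le_add_iff_right]
  exact ⟨fun z hz => (hmin z).mp hz, (hmin _).mpr hsol⟩

/-- Closed-form direct data-driven control input. With `Y|U = Y U† U`,
every minimizer `z*` of `z ↦ (Uz)ᵀQ(Uz) + (Y|U z - y_ref)ᵀR(Y|U z - y_ref)` satisfies
the normal equations `(UᵀQU + Y|UᵀR Y|U) z* = Y|UᵀR y_ref`, and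
`z* = (UᵀQU + Y|UᵀR Y|U)† Y|UᵀR y_ref` is a minimizer. -/
theorem stmt19 {a b N : ℕ}
    (U : Matrix (Fin a) (Fin N) ℝ) (Y : Matrix (Fin b) (Fin N) ℝ)
    (Q : Matrix (Fin a) (Fin a) ℝ) (hQ : Q.PosDef)
    (R : Matrix (Fin b) (Fin b) ℝ) (hR : R.PosDef)
    (yref : Fin b → ℝ)
    -- Moore–Penrose pseudoinverse of U
    (Udag : Matrix (Fin N) (Fin a) ℝ)
    (hU1 : U * Udag * U = U) (hU2 : Udag * U * Udag = Udag)
    (hU3 : (U * Udag)ᵀ = U * Udag) (hU4 : (Udag * U)ᵀ = Udag * U)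
    (YU : Matrix (Fin b) (Fin N) ℝ) (hYU : YU = Y * (Udag * U))
    (f : (Fin N → ℝ) → ℝ)
    (hf : ∀ z, f z = U.mulVec z ⬝ᵥ Q.mulVec (U.mulVec z)
      + (YU.mulVec z - yref) ⬝ᵥ R.mulVec (YU.mulVec z - yref))
    (K : Matrix (Fin N) (Fin N) ℝ) (hK : K = Uᵀ * Q * U + YUᵀ * R * YU)
    -- Moore–Penrose pseudoinverse of K
    (Kdag : Matrix (Fin N) (Fin N) ℝ)
    (hK1 : K * Kdag * K = K) (hK2 : Kdag * K * Kdag = Kdag)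
    (hK3 : (K * Kdag)ᵀ = K * Kdag) (hK4 : (Kdag * K)ᵀ = Kdag * K) :
    (∀ zstar : Fin N → ℝ, (∀ z, f zstar ≤ f z) →
        K.mulVec zstar = (YUᵀ * R).mulVec yref) ∧
      (∀ z, f (Kdag.mulVec ((YUᵀ * R).mulVec yref)) ≤ f z) :=
  stmt19_general U Q hQ R hR yref YU f hf K hK Kdag hK1 hK3
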